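/- arXiv:2008.00286 — 17 statements merged into one kernel-verified Lean document; each statement's English description precedes it below -/
import Mathlib

section
/- If I is a 1-absorbing primary ideal of a commutative ring R, then the radical √I is a prime ideal of R. -/
def IsOneAbsorbingPrimary {R : Type*} [CommRing R] (I : Ideal R) : Prop :=
  I ≠ ⊤ ∧ ∀ a b c : R, ¬IsUnit a → ¬IsUnit b → ¬IsUnit c →
    a * b * c ∈ I → a * b ∈ I ∨ c ∈ I.radical

theorem radical_isPrime_of_oneAbsorbingPrimary {R : Type*} [CommRing R] [Nontrivial R]
    (I : Ideal R) (hI : IsOneAbsorbingPrimary I) : I.radical.IsPrime := by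
  obtain ⟨hne, h⟩ := hI
  have key : ∀ a b : R, ¬IsUnit a → ¬IsUnit b → a * b ∈ I →
      a ∈ I.radical ∨ b ∈ I.radical := by
    intro a b ha hb hab
    rcases h a a b ha ha hb (by
      have : a * (a * b) ∈ I := Ideal.mul_mem_left I a hab
      simpa [mul_assoc] using this) with h1 | h1
    · exact Or.inl ⟨2, by simpa [pow_two] using h1⟩
    · exact Or.inr h1
  constructor
  · rw [Ne, Ideal.radical_eq_top]; exact hne
  · intro a b hab
    by_cases ha : IsUnit a
    · right
      obtain ⟨u, rfl⟩ := ha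
      have := Ideal.mul_mem_left I.radical (↑u⁻¹ : R) hab
      simpa [← mul_assoc] using this
    by_cases hb : IsUnit b
    · left
      obtain ⟨u, rfl⟩ := hb
      have := Ideal.mul_mem_left I.radical (↑u⁻¹ : R) hab
      simpa [mul_comm, ← mul_assoc] using this
    obtain ⟨n, hn⟩ := hab
    rcases Nat.eq_zero_or_pos n with rfl | hnpos
    · exact absurd ((Ideal.eq_top_iff_one I).mpr (by simpa using hn)) hne
    have hn0 : n ≠ 0 := hnpos.ne'
    have han : ¬IsUnit (a ^ n) := fun hu => ha ((isUnit_pow_iff hn0).mp hu)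
    have hbn : ¬IsUnit (b ^ n) := fun hu => hb ((isUnit_pow_iff hn0).mp hu)
    rcases key (a ^ n) (b ^ n) han hbn (by simpa [mul_pow] using hn) with h1 | h1
    · exact Or.inl (by
        have := Ideal.radical_idem I ▸ (Ideal.radical_mono (le_refl I))
        obtain ⟨m, hm⟩ := h1
        exact ⟨n * m, by simpa [pow_mul] using hm⟩)
    · exact Or.inr (by
        obtain ⟨m, hm⟩ := h1
        exact ⟨n * m, by simpa [pow_mul] using hm⟩)
end

section
/- If a commutative ring R admits a 1-absorbing primary ideal that is not a primary ideal, then R is a local (quasilocal) ring. -/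
theorem isLocalRing_of_exists_oneAbsorbingPrimary_not_primary {R : Type*} [CommRing R]
    [Nontrivial R] (I : Ideal R) (h1 : IsOneAbsorbingPrimary I) (h2 : ¬I.IsPrimary) :
    IsLocalRing R := by
  by_contra hloc
  apply h2
  obtain ⟨hI, habs⟩ := h1
  rw [Ideal.isPrimary_iff]
  refine ⟨hI, fun {x y} hxy => ?_⟩
  -- get a with a, 1-a nonunits
  have ⟨a, ha, ha'⟩ : ∃ a : R, ¬IsUnit a ∧ ¬IsUnit (1 - a) := by
    by_contra h
    push_neg at h
    exact hloc (IsLocalRing.of_isUnit_or_isUnit_one_sub_self fun a => by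
      by_cases hu : IsUnit a
      · exact Or.inl hu
      · exact Or.inr (h a hu))
  by_cases hx : IsUnit x
  · right
    obtain ⟨u, rfl⟩ := hx
    have : y ∈ I := by
      have := I.mul_mem_left (↑u⁻¹) hxy
      rwa [← mul_assoc, Units.inv_mul, one_mul] at this
    exact Ideal.le_radical this
  by_cases hy : IsUnit y
  · left
    obtain ⟨u, rfl⟩ := hy
    have := I.mul_mem_left (↑u⁻¹) hxy
    rwa [mul_comm (x) (u : R), ← mul_assoc, Units.inv_mul, one_mul] at this
  -- both nonunits
  have h1 : a * x * y ∈ I := by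
    have := I.mul_mem_left a hxy
    rwa [← mul_assoc] at this
  have h2' : (1 - a) * x * y ∈ I := by
    have := I.mul_mem_left (1 - a) hxy
    rwa [← mul_assoc] at this
  rcases habs a x y ha hx hy h1 with h | h
  · rcases habs (1 - a) x y ha' hx hy h2' with h' | h'
    · left
      have : a * x + (1 - a) * x ∈ I := I.add_mem h h'
      rwa [← add_mul, add_sub_cancel, one_mul] at this
    · exact Or.inr h'
  · exact Or.inr h
end

section
/- If R is a commutative ring that is not local, then a proper ideal I of R is a 1-absorbing primary ideal if and only if I is a primary ideal. -/
theorem oneAbsorbingPrimary_iff_primary_of_not_localRing {R : Type*} [CommRing R]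
    [Nontrivial R] (hR : ¬IsLocalRing R) (I : Ideal R) (hI : I ≠ ⊤) :
    IsOneAbsorbingPrimary I ↔ I.IsPrimary := by
  rw [Ideal.isPrimary_iff]
  -- there exist nonunits u, v with u + v = 1
  obtain ⟨u, hu, hu'⟩ : ∃ u : R, ¬IsUnit u ∧ ¬IsUnit (1 - u) := by
    by_contra h
    push_neg at h
    exact hR (IsLocalRing.of_isUnit_or_isUnit_one_sub_self
      fun a => or_iff_not_imp_left.mpr (h a))
  constructor
  · rintro ⟨-, h⟩
    refine ⟨hI, fun {x y} hxy => ?_⟩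
    by_cases hx : IsUnit x
    · exact Or.inr (Ideal.le_radical (by
        obtain ⟨xu, rfl⟩ := hx
        simpa using I.mul_mem_left (↑xu⁻¹) hxy))
    by_cases hy : IsUnit y
    · left
      obtain ⟨yu, rfl⟩ := hy
      have := I.mul_mem_left (↑yu⁻¹) hxy
      rwa [← mul_assoc, mul_comm ((yu⁻¹ : Rˣ) : R) x, mul_assoc,
        Units.inv_mul, mul_one] at this
    rcases h u x y hu hx hy (by rw [mul_assoc]; exact I.mul_mem_left u hxy) with h1 | h1
    · rcases h (1 - u) x y hu' hx hy
        (by rw [mul_assoc]; exact I.mul_mem_left _ hxy) with h2 | h2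
      · left
        have := I.add_mem h1 h2
        rwa [← add_mul, add_sub_cancel, one_mul] at this
      · exact Or.inr h2
    · exact Or.inr h1
  · rintro ⟨-, h⟩
    exact ⟨hI, fun a b c _ _ _ habc => h habc⟩
end

section
/- Every 1-absorbing primary ideal of a commutative ring R is a 2-absorbing primary ideal of R. -/
def IsTwoAbsorbingPrimary {R : Type*} [CommRing R] (I : Ideal R) : Prop :=
  I ≠ ⊤ ∧ ∀ a b c : R, a * b * c ∈ I →
    a * b ∈ I ∨ a * c ∈ I.radical ∨ b * c ∈ I.radical

theorem Ideal.mul_mem_or_mul_mem_radical_of_isUnit {R : Type*} [CommRing R] {I : Ideal R}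
    {a b c : R} (habc : a * b * c ∈ I) (hunit : IsUnit a ∨ IsUnit b ∨ IsUnit c) :
    a * b ∈ I ∨ a * c ∈ I.radical ∨ b * c ∈ I.radical := by
  rcases hunit with ha | hb | hc
  · rw [mul_assoc, I.unit_mul_mem_iff_mem ha] at habc
    exact Or.inr (Or.inr (I.le_radical habc))
  · rw [mul_right_comm, I.mul_unit_mem_iff_mem hb] at habc
    exact Or.inr (Or.inl (I.le_radical habc))
  · exact Or.inl ((I.mul_unit_mem_iff_mem hc).mp habc)

theorem twoAbsorbingPrimary_of_oneAbsorbingPrimary_general {R : Type*} [CommRing R]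
    (I : Ideal R) (hI : IsOneAbsorbingPrimary I) : IsTwoAbsorbingPrimary I := by
  refine ⟨hI.1, fun a b c habc => ?_⟩
  by_cases hunit : IsUnit a ∨ IsUnit b ∨ IsUnit c
  · exact I.mul_mem_or_mul_mem_radical_of_isUnit habc hunit
  obtain ⟨ha, hb, hc⟩ : ¬IsUnit a ∧ ¬IsUnit b ∧ ¬IsUnit c := by simpa only [not_or] using hunit
  rcases hI.2 a b c ha hb hc habc with hab | hc_rad
  · exact Or.inl hab
  · exact Or.inr (Or.inr (I.radical.mul_mem_left b hc_rad))

theorem twoAbsorbingPrimary_of_oneAbsorbingPrimary {R : Type*} [CommRing R] [Nontrivial R]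
    (I : Ideal R) (hI : IsOneAbsorbingPrimary I) : IsTwoAbsorbingPrimary I :=
  twoAbsorbingPrimary_of_oneAbsorbingPrimary_general I hI
end

section
/- Let R be a local commutative ring with maximal ideal M, and let x ∈ M be a nonzero prime element with M ≠ xR. Then the ideal xM is a 1-absorbing primary ideal that is not a primary ideal of R. -/
/-!
A prime `x` is a nonunit, so `x R ⊆ M` and `√(x M) = x R ∩ √M = x R`. If `abc ∈ x M`
then `x` divides one of the factors: if it divides `a` or `b`, then `ab ∈ x M` because the other factor
lies in `M`; otherwise `x ∣ c`, i.e. `c ∈ √(x M)`. For `m ∈ M \ x R`, the product `x m` lies in `x M`,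
but `x ∉ x M` by Nakayama and `m ∉ x R = √(x M)`, so `x M` is not primary.
-/

namespace Ideal

variable {R : Type*} [CommRing R]

theorem radical_mul_eq_of_isPrime_of_le {P J : Ideal R} (hP : P.IsPrime) (hPJ : P ≤ J) :
    (P * J).radical = P := by
  rw [radical_mul, hP.radical, inf_eq_left]
  exact hPJ.trans le_radical

theorem mul_mem_span_singleton_mul {x a b : R} {J : Ideal R} (ha : x ∣ a) (hb : b ∈ J) :
    a * b ∈ span {x} * J := by
  obtain ⟨a', rfl⟩ := ha
  rw [mul_assoc]
  exact mul_mem_mul (mem_span_singleton_self x) (J.mul_mem_left a' hb)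

end Ideal

namespace IsLocalRing

open Ideal

variable {R : Type*} [CommRing R] [IsLocalRing R]

theorem eq_zero_of_mem_span_singleton_mul_maximalIdeal {x : R}
    (hx : x ∈ span {x} * maximalIdeal R) : x = 0 := by
  have hle : span {x} ≤ maximalIdeal R • span {x} := by
    rw [span_singleton_le_iff_mem, smul_eq_mul, mul_comm]
    exact hx
  have := Submodule.eq_bot_of_le_smul_of_le_jacobson_bot (maximalIdeal R) (span {x})
    (Submodule.fg_span_singleton x) hle (jacobson_eq_maximalIdeal ⊥ bot_ne_top).ge
  exact span_singleton_eq_bot.mp this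

theorem radical_span_singleton_mul_maximalIdeal {x : R} (hp : Prime x) :
    (span {x} * maximalIdeal R).radical = span {x} :=
  radical_mul_eq_of_isPrime_of_le ((span_singleton_prime hp.ne_zero).2 hp)
    ((span_singleton_le_iff_mem _).2 ((mem_maximalIdeal x).2 hp.not_isUnit))

theorem isOneAbsorbingPrimary_span_singleton_mul_maximalIdeal {x : R} (hp : Prime x) :
    IsOneAbsorbingPrimary (span {x} * maximalIdeal R) := by
  refine ⟨ne_top_of_le_ne_top (maximalIdeal.isMaximal R).ne_top mul_le_right,
    fun a b c ha hb _ habc => ?_⟩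
  have hdvd : x ∣ a * b * c := mem_span_singleton.1 (mul_le_left habc)
  rcases hp.dvd_mul.1 hdvd with hab | hc
  · left
    rcases hp.dvd_mul.1 hab with hxa | hxb
    · exact mul_mem_span_singleton_mul hxa ((mem_maximalIdeal b).2 hb)
    · rw [mul_comm a b]
      exact mul_mem_span_singleton_mul hxb ((mem_maximalIdeal a).2 ha)
  · right
    rw [radical_span_singleton_mul_maximalIdeal hp]
    exact mem_span_singleton.2 hc

theorem not_isPrimary_span_singleton_mul_maximalIdeal {x : R} (hp : Prime x)
    (hM : maximalIdeal R ≠ span {x}) : ¬(span {x} * maximalIdeal R).IsPrimary := by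
  intro hprim
  have hlt : span {x} < maximalIdeal R :=
    lt_of_le_of_ne ((span_singleton_le_iff_mem _).2 ((mem_maximalIdeal x).2 hp.not_isUnit))
      hM.symm
  obtain ⟨m, hm, hmx⟩ := SetLike.exists_of_lt hlt
  rcases (isPrimary_iff.1 hprim).2 (mul_mem_mul (mem_span_singleton_self x) hm) with hx | hm'
  · exact hp.ne_zero (eq_zero_of_mem_span_singleton_mul_maximalIdeal hx)
  · exact hmx (radical_span_singleton_mul_maximalIdeal hp ▸ hm')

end IsLocalRing

theorem oneAbsorbingPrimary_mul_maximalIdeal_not_primary_general {R : Type*} [CommRing R]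
    [IsLocalRing R] (x : R) (hp : Prime x)
    (hM : IsLocalRing.maximalIdeal R ≠ Ideal.span {x}) :
    IsOneAbsorbingPrimary (Ideal.span {x} * IsLocalRing.maximalIdeal R) ∧
      ¬(Ideal.span {x} * IsLocalRing.maximalIdeal R).IsPrimary :=
  ⟨IsLocalRing.isOneAbsorbingPrimary_span_singleton_mul_maximalIdeal hp,
    IsLocalRing.not_isPrimary_span_singleton_mul_maximalIdeal hp hM⟩

theorem oneAbsorbingPrimary_mul_maximalIdeal_not_primary {R : Type*} [CommRing R]
    [IsLocalRing R] (x : R) (hx : x ∈ IsLocalRing.maximalIdeal R) (hp : Prime x)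
    (hM : IsLocalRing.maximalIdeal R ≠ Ideal.span {x}) :
    IsOneAbsorbingPrimary (Ideal.span {x} * IsLocalRing.maximalIdeal R) ∧
      ¬(Ideal.span {x} * IsLocalRing.maximalIdeal R).IsPrimary :=
  oneAbsorbingPrimary_mul_maximalIdeal_not_primary_general x hp hM
end

section
/- Let R be a local commutative ring with maximal ideal M and let P be a prime ideal of R. Then the product PM is a 1-absorbing primary ideal of R. -/
/-! Since `P ≤ M`, the radical of `P * M` is `P ⊓ M = P`. If `a * b * c ∈ P * M` and `c ∉ P`,
then `a ∈ P` or `b ∈ P`, and the other factor, a nonunit, lies in `M`. -/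

namespace IsLocalRing

variable {R : Type*} [CommRing R] [IsLocalRing R]

theorem mul_mem_mul_maximalIdeal {I : Ideal R} {a b : R} (ha : a ∈ I) (hb : ¬IsUnit b) :
    a * b ∈ I * maximalIdeal R :=
  Ideal.mul_mem_mul ha ((mem_maximalIdeal b).mpr hb)

theorem radical_prime_mul_maximalIdeal {P : Ideal R} (hP : P.IsPrime) :
    (P * maximalIdeal R).radical = P := by
  rw [Ideal.radical_mul, hP.radical, (maximalIdeal.isMaximal R).isPrime.radical]
  exact inf_eq_left.mpr (le_maximalIdeal hP.ne_top)

end IsLocalRing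

theorem oneAbsorbingPrimary_prime_mul_maximalIdeal {R : Type*} [CommRing R]
    [IsLocalRing R] (P : Ideal R) (hP : P.IsPrime) :
    IsOneAbsorbingPrimary (P * IsLocalRing.maximalIdeal R) := by
  have hle : P * IsLocalRing.maximalIdeal R ≤ P := Ideal.mul_le_left
  refine ⟨ne_top_of_le_ne_top hP.ne_top hle, fun a b c ha hb _ habc => ?_⟩
  rw [IsLocalRing.radical_prime_mul_maximalIdeal hP]
  rcases hP.mem_or_mem (hle habc) with hab | hcP
  · left
    rcases hP.mem_or_mem hab with haP | hbP
    · exact IsLocalRing.mul_mem_mul_maximalIdeal haP hb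
    · exact mul_comm b a ▸ IsLocalRing.mul_mem_mul_maximalIdeal hbP ha
  · exact Or.inr hcP
end

section
/- If I is a 1-absorbing primary ideal of a commutative ring R and c ∈ R \ I is a nonunit element, then the ideal quotient (I : c) = {x ∈ R : cx ∈ I} is a primary ideal of R. -/
open Pointwise in
lemma radical_mem_imp_smul_top_le {R : Type*} [CommRing R] {J : Ideal R} {r : R}
    (h : r ∈ J.radical) : ∃ n : ℕ, (r ^ n • ⊤ : Ideal R) ≤ J := by
  obtain ⟨n, hn⟩ := h
  refine ⟨n, ?_⟩
  intro y hy
  rw [← SetLike.mem_coe, Submodule.coe_pointwise_smul] at hy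
  obtain ⟨m, -, rfl⟩ := hy
  exact Ideal.mul_mem_right m J hn

theorem colon_isPrimary_of_oneAbsorbingPrimary {R : Type*} [CommRing R] [Nontrivial R]
    (I : Ideal R) (hI : IsOneAbsorbingPrimary I) (c : R) (hc : ¬IsUnit c) (hcI : c ∉ I) :
    (Submodule.colon I (Ideal.span {c})).IsPrimary := by
  obtain ⟨hne, h1⟩ := hI
  have hIsub : I ≤ Submodule.colon I (Ideal.span {c}) := fun x hx => by
    rw [Ideal.mem_colon_span_singleton]; exact Ideal.mul_mem_right c I hx
  constructor
  · intro h
    have : (1 : R) ∈ Submodule.colon I (Ideal.span {c}) := h ▸ Submodule.mem_top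
    rw [Ideal.mem_colon_span_singleton, one_mul] at this
    exact hcI this
  · intro r x hxy
    rw [smul_eq_mul, Ideal.mem_colon_span_singleton] at hxy
    by_cases hr : IsUnit r
    · left
      rw [Ideal.mem_colon_span_singleton]
      obtain ⟨u, rfl⟩ := hr
      have := Ideal.mul_mem_left I (↑u⁻¹ : R) hxy
      rwa [show ((u⁻¹ : Rˣ) : R) * (↑u * x * c) = x * c by
        rw [← mul_assoc, ← mul_assoc, ← Units.val_mul, inv_mul_cancel, Units.val_one, one_mul]]
        at this
    · by_cases hx : IsUnit x
      · right
        apply radical_mem_imp_smul_top_le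
        apply Ideal.le_radical
        rw [Ideal.mem_colon_span_singleton]
        obtain ⟨u, rfl⟩ := hx
        have := Ideal.mul_mem_left I (↑u⁻¹ : R) hxy
        rwa [show ((u⁻¹ : Rˣ) : R) * (r * ↑u * c) = r * c by
          rw [show r * ↑u * c = ↑u * (r * c) by ring, ← mul_assoc, ← Units.val_mul,
            inv_mul_cancel, Units.val_one, one_mul]] at this
      · rcases h1 x c r hx hc hr (by rwa [show x * c * r = r * x * c by ring]) with h | h
        · left; rwa [Ideal.mem_colon_span_singleton]
        · right; exact radical_mem_imp_smul_top_le (Ideal.radical_mono hIsub h)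
end

section
/- Let R be a divided commutative ring. Then a proper ideal I of R is a 1-absorbing primary ideal if and only if I is a primary ideal. -/
/-!
Primary ideals are trivially 1-absorbing primary. Conversely, let `I` be 1-absorbing primary in a
divided ring and `x * y ∈ I` with `y ∉ √I`. Some prime `P ⊇ I` misses `y`, so `x ∈ P` and, the ring
being divided, `x = y * t`. Then `t * y * y = x * y ∈ I`, and 1-absorption forces `x = t * y ∈ I`
(a unit `t` would put `y * y` in `I`).
-/

def IsDivided (R : Type*) [CommRing R] : Prop :=
  ∀ P : Ideal R, P.IsPrime → ∀ x ∉ P, ∀ p ∈ P, x ∣ p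

section

variable {R : Type*} [CommRing R] {I : Ideal R} {x y : R}

theorem Ideal.exists_isPrime_le_notMem_of_notMem_radical (hy : y ∉ I.radical) :
    ∃ P : Ideal R, P.IsPrime ∧ I ≤ P ∧ y ∉ P := by
  rw [Ideal.radical_eq_sInf, Submodule.mem_sInf] at hy
  push Not at hy
  obtain ⟨P, ⟨hIP, hP⟩, hyP⟩ := hy
  exact ⟨P, hP, hIP, hyP⟩

theorem IsDivided.dvd_of_mul_mem_of_notMem_radical (hR : IsDivided R) (hxy : x * y ∈ I)
    (hy : y ∉ I.radical) : y ∣ x := by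
  obtain ⟨P, hP, hIP, hyP⟩ := Ideal.exists_isPrime_le_notMem_of_notMem_radical hy
  have hxP : x ∈ P := (hP.mem_or_mem (hIP hxy)).resolve_right hyP
  exact hR P hP y hyP x hxP

theorem Ideal.IsPrimary.isOneAbsorbingPrimary (hI : I.IsPrimary) : IsOneAbsorbingPrimary I :=
  ⟨hI.ne_top, fun _ _ _ _ _ _ habc => (Ideal.isPrimary_iff.mp hI).2 habc⟩

theorem IsOneAbsorbingPrimary.mem_of_dvd (hI : IsOneAbsorbingPrimary I) (hxy : x * y ∈ I)
    (hy : ¬IsUnit y) (hyI : y ∉ I.radical) (hdvd : y ∣ x) : x ∈ I := by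
  obtain ⟨t, rfl⟩ := hdvd
  by_cases ht : IsUnit t
  · have hyy : y * y ∈ I := by
      rw [← Ideal.mul_unit_mem_iff_mem I ht, mul_right_comm]
      exact hxy
    exact absurd ⟨2, by rwa [pow_two]⟩ hyI
  · have htyy : t * y * y ∈ I := by rwa [mul_comm t y]
    rw [mul_comm y t]
    exact (hI.2 t y y ht hy hy htyy).resolve_right hyI

theorem IsOneAbsorbingPrimary.isPrimary_of_isDivided (hR : IsDivided R)
    (hI : IsOneAbsorbingPrimary I) : I.IsPrimary := by
  refine Ideal.isPrimary_iff.mpr ⟨hI.1, fun {x y} hxy => or_iff_not_imp_right.mpr fun hyI => ?_⟩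
  by_cases hy : IsUnit y
  · exact (Ideal.mul_unit_mem_iff_mem I hy).mp hxy
  · exact hI.mem_of_dvd hxy hy hyI (hR.dvd_of_mul_mem_of_notMem_radical hxy hyI)

end

theorem oneAbsorbingPrimary_iff_primary_of_divided_general {R : Type*} [CommRing R]
    (hdiv : ∀ P : Ideal R, P.IsPrime → ∀ x ∉ P, ∀ p ∈ P, x ∣ p)
    (I : Ideal R) :
    IsOneAbsorbingPrimary I ↔ I.IsPrimary :=
  ⟨IsOneAbsorbingPrimary.isPrimary_of_isDivided hdiv, Ideal.IsPrimary.isOneAbsorbingPrimary⟩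

theorem oneAbsorbingPrimary_iff_primary_of_divided {R : Type*} [CommRing R] [Nontrivial R]
    (hdiv : ∀ P : Ideal R, P.IsPrime → ∀ x ∉ P, ∀ p ∈ P, x ∣ p)
    (I : Ideal R) (hI : I ≠ ⊤) :
    IsOneAbsorbingPrimary I ↔ I.IsPrimary :=
  oneAbsorbingPrimary_iff_primary_of_divided_general hdiv I
end

section
/- Let R be a divided commutative ring with maximal ideal M. If M is not a principal prime ideal of R, then no nonzero prime ideal of R is principal. -/
theorem not_principal_prime_of_divided {R : Type*} [CommRing R] [IsLocalRing R]
    (hdiv : ∀ P : Ideal R, P.IsPrime → ∀ x ∉ P, ∀ p ∈ P, x ∣ p)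
    (hM : ¬((IsLocalRing.maximalIdeal R).IsPrime ∧
      Submodule.IsPrincipal (IsLocalRing.maximalIdeal R)))
    (P : Ideal R) (hP0 : P ≠ ⊥) (hP : P.IsPrime) : ¬Submodule.IsPrincipal P := by
  intro hPrin
  obtain ⟨g, hg⟩ := hPrin
  have hgP : g ∈ P := by rw [hg]; exact Ideal.subset_span rfl
  have hg0 : g ≠ 0 := by
    rintro rfl
    rw [hg, Submodule.span_zero_singleton] at hP0; exact hP0 rfl
  -- maximal ideal ≤ P
  have hMP : IsLocalRing.maximalIdeal R ≤ P := by
    intro x hx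
    by_contra hxP
    obtain ⟨y, hy⟩ := hdiv P hP x hxP g hgP
    have hyP : y ∈ P := ((hP.mem_or_mem (hy ▸ hgP)).resolve_left hxP)
    have hys : y ∈ Submodule.span R {g} := hg ▸ hyP
    obtain ⟨t, ht⟩ := Ideal.mem_span_singleton.mp hys
    have hunit : IsUnit (1 - x * t) :=
      IsLocalRing.isUnit_one_sub_self_of_mem_nonunits _
        ((IsLocalRing.maximalIdeal R).mul_mem_right t hx)
    have hzero : g * (1 - x * t) = 0 := by
      have : g = g * (x * t) := by
        calc g = x * y := hy
        _ = x * (g * t) := by rw [ht]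
        _ = g * (x * t) := by ring
      linear_combination this
    exact hg0 ((hunit.mul_left_eq_zero.mp (by linear_combination hzero)))
  have hPM : P = IsLocalRing.maximalIdeal R :=
    le_antisymm (IsLocalRing.le_maximalIdeal hP.ne_top) hMP
  exact hM ⟨hPM ▸ hP, hPM ▸ ⟨g, hg⟩⟩
end

section
/- Let R be a divided integral domain and P a prime ideal of R. Then Pⁿ is a primary ideal of R for every positive integer n ≥ 1. -/
theorem pow_prime_isPrimary_of_divided_domain {R : Type*} [CommRing R] [IsDomain R]
    (hdiv : ∀ P : Ideal R, P.IsPrime → ∀ x ∉ P, ∀ p ∈ P, x ∣ p)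
    (P : Ideal R) (hP : P.IsPrime) (n : ℕ) (hn : 1 ≤ n) : (P ^ n).IsPrimary := by
  have hn0 : n ≠ 0 := by omega
  rw [Ideal.isPrimary_iff]
  constructor
  · intro htop
    exact hP.ne_top (top_le_iff.mp (htop ▸ Ideal.pow_le_self hn0))
  · intro x y hxy
    by_cases hy : y ∈ P
    · right
      rwa [P.radical_pow hn0, hP.radical]
    · left
      have hy0 : y ≠ 0 := fun h => hy (h ▸ P.zero_mem)
      obtain ⟨m, rfl⟩ : ∃ m, n = m + 1 := ⟨n - 1, by omega⟩
      have key : ∀ z ∈ P ^ (m + 1), ∃ w ∈ P ^ (m + 1), z = y * w := by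
        intro z hz
        rw [pow_succ'] at hz ⊢
        refine Submodule.mul_induction_on hz ?_ ?_
        · intro p hp q hq
          obtain ⟨r, hr⟩ := hdiv P hP y hy p hp
          have hrP : r ∈ P := by
            rcases hP.mem_or_mem (show y * r ∈ P from hr ▸ hp) with h | h
            · exact absurd h hy
            · exact h
          exact ⟨r * q, Ideal.mul_mem_mul hrP hq, by rw [hr]; ring⟩
        · rintro a b ⟨wa, hwa, rfl⟩ ⟨wb, hwb, rfl⟩
          exact ⟨wa + wb, Ideal.add_mem _ hwa hwb, by ring⟩
      obtain ⟨w, hw, hxw⟩ := key (x * y) hxy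
      have hx : x = w := by
        apply mul_left_cancel₀ hy0
        rw [mul_comm] at hxw
        exact hxw
      exact hx ▸ hw
end

section
/- Let R be a Dedekind domain and I a nonzero proper ideal of R. Then I is a 1-absorbing primary ideal of R if and only if √I is a prime ideal of R. -/
theorem oneAbsorbingPrimary_iff_radical_prime_dedekind {R : Type*} [CommRing R]
    [IsDomain R] [IsDedekindDomain R] (I : Ideal R) (hI0 : I ≠ ⊥) (hI : I ≠ ⊤) :
    IsOneAbsorbingPrimary I ↔ I.radical.IsPrime := by
  constructor
  · rintro ⟨-, habs⟩
    refine ⟨fun h => hI (Ideal.radical_eq_top.mp h), ?_⟩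
    intro x y hxy
    by_cases hux : IsUnit x
    · refine Or.inr ?_
      obtain ⟨u, rfl⟩ := hux
      have hyeq : y = ↑u⁻¹ * (↑u * y) := by
        rw [← mul_assoc, Units.inv_mul, one_mul]
      rw [hyeq]
      exact Ideal.mul_mem_left _ _ hxy
    by_cases huy : IsUnit y
    · refine Or.inl ?_
      obtain ⟨u, rfl⟩ := huy
      have hxeq : x = ↑u⁻¹ * (x * ↑u) := by
        rw [mul_comm x ↑u, ← mul_assoc, Units.inv_mul, one_mul]
      rw [hxeq]
      exact Ideal.mul_mem_left _ _ hxy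
    by_contra hcon
    push_neg at hcon
    obtain ⟨hx, hy⟩ := hcon
    have hxp : ∀ j : ℕ, ¬IsUnit (x ^ (j + 1)) := by
      intro j h
      rw [pow_succ'] at h
      exact hux (isUnit_of_mul_isUnit_left h)
    have hyp : ∀ j : ℕ, ¬IsUnit (y ^ (j + 1)) := by
      intro j h
      rw [pow_succ'] at h
      exact huy (isUnit_of_mul_isUnit_left h)
    have key : ∀ m j : ℕ, x ^ (j + 1) * y ^ (m + 1) ∈ I → False := by
      intro m
      induction m with
      | zero =>
        intro j h
        have h2 : x * x ^ (j + 1) * y ^ 1 ∈ I := by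
          have := Ideal.mul_mem_left I x h
          rw [← mul_assoc] at this
          exact this
        rcases habs x (x ^ (j + 1)) (y ^ 1) hux (hxp j) (hyp 0) h2 with h' | h'
        · rw [← pow_succ'] at h'
          exact hx (Ideal.mem_radical_of_pow_mem (Ideal.le_radical h'))
        · exact hy (by simpa using h')
      | succ m ih =>
        intro j h
        have h2 : x ^ (j + 1) * y ^ (m + 1) * y ∈ I := by
          rw [mul_assoc, ← pow_succ]
          exact h
        rcases habs (x ^ (j + 1)) (y ^ (m + 1)) y (hxp j) (hyp m) huy h2 with h' | h'
        · exact ih j h'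
        · exact hy h'
    obtain ⟨n, hn⟩ := hxy
    rcases n with _ | n
    · exact hI (Ideal.eq_top_iff_one I |>.mpr (by simpa using hn))
    · rw [mul_pow] at hn
      exact key n n hn
  · intro hrad
    have hradbot : I.radical ≠ ⊥ := fun h => hI0 (le_bot_iff.mp (h ▸ Ideal.le_radical))
    have hmax : I.radical.IsMaximal := Ideal.IsPrime.isMaximal hrad hradbot
    have hprimary : I.IsPrimary := Ideal.isPrimary_of_isMaximal_radical hmax
    refine ⟨hI, fun a b c _ _ _ habc => ?_⟩
    exact (Ideal.isPrimary_iff.mp hprimary).2 habc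
end

section
/- Let R be a principal ideal domain and I a nonzero proper ideal of R. Then I is a 1-absorbing primary ideal of R if and only if I = pⁿR for some nonzero prime element p of R and positive integer n ≥ 1. -/
private lemma prod_assoc_pow {R : Type*} [CommMonoid R] (p : R) (s : Multiset R)
    (h : ∀ q ∈ s, Associated q p) : Associated s.prod (p ^ Multiset.card s) := by
  induction s using Multiset.induction with
  | empty => simp
  | cons a s ih =>
    simp only [Multiset.prod_cons, Multiset.card_cons, pow_succ, mul_comm (p ^ Multiset.card s) p]
    exact (h a (Multiset.mem_cons_self a s)).mul_mul
      (ih fun q hq => h q (Multiset.mem_cons_of_mem hq))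

theorem oneAbsorbingPrimary_iff_prime_pow_pid {R : Type*} [CommRing R] [IsDomain R]
    [IsPrincipalIdealRing R] (I : Ideal R) (hI0 : I ≠ ⊥) (hI : I ≠ ⊤) :
    IsOneAbsorbingPrimary I ↔
      ∃ (p : R) (n : ℕ), Prime p ∧ 1 ≤ n ∧ I = Ideal.span {p ^ n} := by
  constructor
  · rintro ⟨-, h2⟩
    obtain ⟨g, rfl⟩ : ∃ g, I = Ideal.span {g} := by
      obtain ⟨g, hg⟩ := (IsPrincipalIdealRing.principal I).principal
      exact ⟨g, by rw [hg, Ideal.submodule_span_eq]⟩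
    have hg0 : g ≠ 0 := by
      rintro rfl; exact hI0 (by simp)
    have hgu : ¬IsUnit g := fun h => hI (Ideal.span_singleton_eq_top.mpr h)
    have hfprod := UniqueFactorizationMonoid.factors_prod hg0
    have hfactors_ne : UniqueFactorizationMonoid.factors g ≠ 0 := by
      intro h
      rw [h, Multiset.prod_zero] at hfprod
      exact hgu (hfprod.isUnit isUnit_one)
    obtain ⟨p, hpmem⟩ := Multiset.exists_mem_of_ne_zero hfactors_ne
    have hp : Prime p := UniqueFactorizationMonoid.prime_of_factor p hpmem
    -- key claim: every q in factors g is associated to p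
    have key : ∀ q ∈ UniqueFactorizationMonoid.factors g, Associated q p := by
      intro q hqmem
      have hq : Prime q := UniqueFactorizationMonoid.prime_of_factor q hqmem
      by_contra hassoc
      -- q divides g, p divides g, q not associated to p
      obtain ⟨h, hh⟩ := UniqueFactorizationMonoid.dvd_of_mem_factors hpmem
      have hqg : q ∣ g := UniqueFactorizationMonoid.dvd_of_mem_factors hqmem
      have hqp : ¬ q ∣ p := by
        intro hd
        obtain ⟨r, hr⟩ := hd
        rcases hp.irreducible.isUnit_or_isUnit hr with h1 | h1
        · exact hq.not_unit h1
        · exact hassoc ⟨h1.unit, by rw [hr, IsUnit.unit_spec]⟩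
      have hqh : q ∣ h := by
        rcases (hq.dvd_mul.mp (hh ▸ hqg)) with h1 | h1
        · exact absurd h1 hqp
        · exact h1
      obtain ⟨d, hd⟩ := hqh
      -- g = p * (q * d)
      have hgeq : g = p * (q * d) := by rw [hh, hd]
      have hd0 : d ≠ 0 := by rintro rfl; exact hg0 (by rw [hgeq]; ring)
      have hp0 : p ≠ 0 := hp.ne_zero
      -- apply 1-absorbing with a = p, b = p*d, c = q
      have hmem : p * (p * d) * q ∈ Ideal.span {g} := by
        rw [Ideal.mem_span_singleton, hgeq]
        exact ⟨p, by ring⟩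
      have hpd : ¬IsUnit (p * d) := fun h => hp.not_unit (isUnit_of_mul_isUnit_left h)
      rcases h2 p (p * d) q hp.not_unit hpd hq.not_unit hmem with hab | hc
      · rw [Ideal.mem_span_singleton, hgeq] at hab
        -- p*(q*d) ∣ p*(p*d) ⇒ q*d ∣ p*d ⇒ q ∣ p
        rw [show p * (p * d) = p * (d * p) by ring, show p * (q * d) = p * (d * q) by ring,
          mul_dvd_mul_iff_left hp0, mul_dvd_mul_iff_left hd0] at hab
        exact hqp hab
      · rw [Ideal.mem_radical_iff] at hc
        obtain ⟨m, hm⟩ := hc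
        rw [Ideal.mem_span_singleton] at hm
        have hpq : p ∣ q ^ m := dvd_trans ⟨q * d, hgeq⟩ hm
        have := hp.dvd_of_dvd_pow hpq
        obtain ⟨r, hr⟩ := this
        rcases hq.irreducible.isUnit_or_isUnit hr with h1 | h1
        · exact hp.not_unit h1
        · exact hassoc ((show Associated p q from ⟨h1.unit, by rw [IsUnit.unit_spec, ← hr]⟩).symm)
    have hassoc : Associated g (p ^ Multiset.card (UniqueFactorizationMonoid.factors g)) :=
      hfprod.symm.trans (prod_assoc_pow p _ key)
    refine ⟨p, _, hp, ?_, Ideal.span_singleton_eq_span_singleton.mpr hassoc⟩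
    rw [Nat.one_le_iff_ne_zero]
    intro h
    rw [h, pow_zero] at hassoc
    exact hgu (hassoc.symm.isUnit isUnit_one)
  · rintro ⟨p, n, hp, hn, rfl⟩
    refine ⟨hI, fun a b c ha hb hc habc => ?_⟩
    rw [Ideal.mem_span_singleton] at habc
    by_cases hpc : p ∣ c
    · right
      rw [Ideal.mem_radical_iff]
      exact ⟨n, Ideal.mem_span_singleton.mpr (pow_dvd_pow_of_dvd hpc n)⟩
    · left
      exact Ideal.mem_span_singleton.mpr (hp.pow_dvd_of_dvd_mul_right n hpc habc)
end

section
/- If I₁, ..., Iₙ are 1-absorbing primary ideals of a commutative ring R all having the same radical P, then their intersection I₁ ∩ ⋯ ∩ Iₙ is a 1-absorbing primary ideal with radical P. -/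
theorem oneAbsorbingPrimary_iInf {R : Type*} [CommRing R] [Nontrivial R] (n : ℕ)
    (hn : 1 ≤ n) (I : Fin n → Ideal R) (P : Ideal R)
    (h : ∀ i, IsOneAbsorbingPrimary (I i) ∧ (I i).radical = P) :
    IsOneAbsorbingPrimary (⨅ i, I i) ∧ (⨅ i, I i).radical = P := by
  have i0 : Fin n := ⟨0, hn⟩
  have hrad : (⨅ i, I i).radical = P := by
    apply le_antisymm
    · refine le_trans (Ideal.radical_mono (iInf_le _ i0)) ?_
      rw [(h i0).2]
    · intro x hx
      have hxi : ∀ i, ∃ k, x ^ k ∈ I i := by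
        intro i
        have hx' : x ∈ (I i).radical := by rw [(h i).2]; exact hx
        exact hx'
      choose k hk using hxi
      have hN : ∀ i, x ^ Finset.univ.sup k ∈ I i := fun i =>
        (I i).pow_mem_of_pow_mem (hk i) (Finset.le_sup (f := k) (Finset.mem_univ i))
      exact Ideal.mem_radical_iff.mpr ⟨Finset.univ.sup k, Ideal.mem_iInf.mpr hN⟩
  refine ⟨⟨?_, ?_⟩, hrad⟩
  · intro htop
    exact (h i0).1.1 (top_le_iff.mp (htop ▸ iInf_le _ i0))
  · intro a b c ha hb hc habc
    by_cases hab : ∀ i, a * b ∈ I i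
    · exact Or.inl (Ideal.mem_iInf.mpr hab)
    · push_neg at hab
      obtain ⟨i, hi⟩ := hab
      rcases (h i).1.2 a b c ha hb hc (Ideal.mem_iInf.mp habc i) with h1 | h2
      · exact absurd h1 hi
      · right; rw [hrad, ← (h i).2]; exact h2
end

section
/- Let f: R₁ → R₂ be a surjective ring homomorphism of commutative rings and I a 1-absorbing primary ideal of R₁ with ker(f) ⊆ I. Then f(I) is a 1-absorbing primary ideal of R₂. -/
theorem oneAbsorbingPrimary_map {R₁ R₂ : Type*} [CommRing R₁] [CommRing R₂] [Nontrivial R₁]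
    [Nontrivial R₂] (f : R₁ →+* R₂) (hf : Function.Surjective f) (I : Ideal R₁)
    (hI : IsOneAbsorbingPrimary I) (hker : RingHom.ker f ≤ I) :
    IsOneAbsorbingPrimary (I.map f) := by
  obtain ⟨hItop, hmain⟩ := hI
  have hcm : Ideal.comap f (Ideal.map f I) = I := by
    rw [Ideal.comap_map_of_surjective f hf]
    exact sup_eq_left.mpr hker
  constructor
  · intro htop
    apply hItop
    rw [← hcm, htop, Ideal.comap_top]
  · intro a b c ha hb hc habc
    obtain ⟨a', rfl⟩ := hf a
    obtain ⟨b', rfl⟩ := hf b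
    obtain ⟨c', rfl⟩ := hf c
    have ha' : ¬IsUnit a' := fun h => ha (h.map f)
    have hb' : ¬IsUnit b' := fun h => hb (h.map f)
    have hc' : ¬IsUnit c' := fun h => hc (h.map f)
    have hmem : a' * b' * c' ∈ I := by
      rw [← hcm]
      simpa using habc
    rcases hmain a' b' c' ha' hb' hc' hmem with h | h
    · left
      rw [← map_mul]
      exact Ideal.mem_map_of_mem f h
    · right
      obtain ⟨n, hn⟩ := h
      exact ⟨n, by rw [← map_pow]; exact Ideal.mem_map_of_mem f hn⟩
end

section
/- Let S be a multiplicatively closed subset of a commutative ring R and I a 1-absorbing primary ideal of R with I ∩ S = ∅. Then the localization S⁻¹I is a 1-absorbing primary ideal of S⁻¹R. -/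
theorem oneAbsorbingPrimary_localization {R : Type*} [CommRing R] [Nontrivial R]
    (S : Submonoid R) (I : Ideal R) (hI : IsOneAbsorbingPrimary I)
    (hdisj : Disjoint (I : Set R) (S : Set R)) :
    IsOneAbsorbingPrimary (I.map (algebraMap R (Localization S))) := by
  set f := algebraMap R (Localization S) with hf
  set J := I.map f with hJ
  constructor
  · intro htop
    have h1 : (1 : Localization S) ∈ J := htop ▸ Submodule.mem_top
    rw [hJ, IsLocalization.mem_map_algebraMap_iff S] at h1
    obtain ⟨⟨i, s⟩, hi⟩ := h1
    rw [one_mul] at hi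
    obtain ⟨t, ht⟩ := (IsLocalization.eq_iff_exists S (Localization S)).mp hi
    have hmem : (t : R) * (s : R) ∈ I := ht ▸ I.mul_mem_left (t : R) i.2
    exact Set.disjoint_left.mp hdisj hmem (S.mul_mem t.2 s.2)
  · intro a b c ha hb hc habc
    obtain ⟨⟨a₁, s₁⟩, ha1⟩ := IsLocalization.surj S a
    obtain ⟨⟨b₁, s₂⟩, hb1⟩ := IsLocalization.surj S b
    obtain ⟨⟨c₁, s₃⟩, hc1⟩ := IsLocalization.surj S c
    simp only at ha1 hb1 hc1
    rw [← hf] at ha1 hb1 hc1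
    have hnb : ¬ IsUnit b₁ := by
      intro h
      exact hb (isUnit_of_mul_isUnit_left (hb1 ▸ h.map f))
    have hnc : ¬ IsUnit c₁ := by
      intro h
      exact hc (isUnit_of_mul_isUnit_left (hc1 ▸ h.map f))
    have hna : ¬ IsUnit a₁ := by
      intro h
      exact ha (isUnit_of_mul_isUnit_left (ha1 ▸ h.map f))
    rw [hJ, IsLocalization.mem_map_algebraMap_iff S] at habc
    obtain ⟨⟨i, u⟩, hiu⟩ := habc
    simp only at hiu
    rw [← hf] at hiu
    have key : f (a₁ * b₁ * c₁ * u) = f ((i : R) * (s₁ * s₂ * s₃)) := by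
      simp only [map_mul]
      rw [← ha1, ← hb1, ← hc1, ← hiu]
      ring
    obtain ⟨t, ht⟩ := (IsLocalization.eq_iff_exists S (Localization S)).mp key
    have htuI : ((t : R) * u * a₁) * b₁ * c₁ ∈ I := by
      have : ((t : R) * u * a₁) * b₁ * c₁ = (t : R) * (a₁ * b₁ * c₁ * u) := by ring
      rw [this, ht]
      exact I.mul_mem_left _ (I.mul_mem_right _ i.2)
    have hntu : ¬ IsUnit ((t : R) * u * a₁) := fun h => hna (isUnit_of_mul_isUnit_right h)
    rcases hI.2 _ _ _ hntu hnb hnc htuI with h | h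
    · left
      have hu2 : IsUnit (f ((t : R) * u * s₁ * s₂)) :=
        IsLocalization.map_units (Localization S)
          ⟨_, S.mul_mem (S.mul_mem (S.mul_mem t.2 u.2) s₁.2) s₂.2⟩
      obtain ⟨v, hv⟩ := hu2
      have heq : a * b = f ((t : R) * u * a₁ * b₁) * ↑v⁻¹ := by
        rw [Units.eq_mul_inv_iff_mul_eq, hv]
        simp only [map_mul]
        rw [← ha1, ← hb1]
        ring
      rw [heq]
      exact J.mul_mem_right _ (Ideal.mem_map_of_mem f h)
    · right
      obtain ⟨n, hn⟩ := h
      refine ⟨n, ?_⟩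
      have hu3 : IsUnit (f ((s₃ : R) ^ n)) :=
        IsLocalization.map_units (Localization S) ⟨_, S.pow_mem s₃.2 n⟩
      obtain ⟨v, hv⟩ := hu3
      have heq : c ^ n = f (c₁ ^ n) * ↑v⁻¹ := by
        rw [Units.eq_mul_inv_iff_mul_eq, hv, map_pow, map_pow, ← hc1]
        ring
      rw [heq]
      exact J.mul_mem_right _ (Ideal.mem_map_of_mem f hn)
end

section
/- Let I be a 1-absorbing primary ideal of a commutative ring R. If abJ ⊆ I for nonunit elements a, b ∈ R and a proper ideal J of R, then ab ∈ I or J ⊆ √I. -/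
theorem mul_mem_or_le_radical_of_oneAbsorbingPrimary {R : Type*} [CommRing R] [Nontrivial R]
    (I : Ideal R) (hI : IsOneAbsorbingPrimary I) (a b : R) (ha : ¬IsUnit a)
    (hb : ¬IsUnit b) (J : Ideal R) (hJ : J ≠ ⊤)
    (habJ : ∀ j ∈ J, a * b * j ∈ I) : a * b ∈ I ∨ J ≤ I.radical := by
  by_cases hab : a * b ∈ I
  · exact Or.inl hab
  · refine Or.inr fun j hj => ?_
    have hju : ¬IsUnit j := fun h => hJ (J.eq_top_of_isUnit_mem hj h)
    exact (hI.2 a b j ha hb hju (habJ j hj)).resolve_left hab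
end

section
/- A proper ideal I of a commutative ring R is a 1-absorbing primary ideal if and only if for all proper ideals I₁, I₂, I₃ of R with I₁I₂I₃ ⊆ I, either I₁I₂ ⊆ I or I₃ ⊆ √I. -/
theorem oneAbsorbingPrimary_iff_ideals {R : Type*} [CommRing R] [Nontrivial R]
    (I : Ideal R) (hI : I ≠ ⊤) :
    IsOneAbsorbingPrimary I ↔
      ∀ I₁ I₂ I₃ : Ideal R, I₁ ≠ ⊤ → I₂ ≠ ⊤ → I₃ ≠ ⊤ →
        I₁ * I₂ * I₃ ≤ I → I₁ * I₂ ≤ I ∨ I₃ ≤ I.radical := by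
  constructor
  · rintro ⟨-, h⟩ I₁ I₂ I₃ h1 h2 h3 hle
    by_cases hc : I₃ ≤ I.radical
    · exact Or.inr hc
    · left
      obtain ⟨c, hcI3, hcr⟩ := SetLike.not_le_iff_exists.mp hc
      have hcu : ¬IsUnit c := fun hu => h3 (I₃.eq_top_of_isUnit_mem hcI3 hu)
      refine Ideal.mul_le.mpr fun a ha b hb => ?_
      have hau : ¬IsUnit a := fun hu => h1 (I₁.eq_top_of_isUnit_mem ha hu)
      have hbu : ¬IsUnit b := fun hu => h2 (I₂.eq_top_of_isUnit_mem hb hu)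
      have : a * b * c ∈ I := hle (Ideal.mul_mem_mul (Ideal.mul_mem_mul ha hb) hcI3)
      rcases h a b c hau hbu hcu this with h' | h'
      · exact h'
      · exact absurd h' hcr
  · intro h
    refine ⟨hI, fun a b c hau hbu hcu habc => ?_⟩
    have h1 : Ideal.span {a} ≠ ⊤ := by
      simpa [Ideal.span_singleton_eq_top] using hau
    have h2 : Ideal.span {b} ≠ ⊤ := by
      simpa [Ideal.span_singleton_eq_top] using hbu
    have h3 : Ideal.span {c} ≠ ⊤ := by
      simpa [Ideal.span_singleton_eq_top] using hcu
    have hle : Ideal.span {a} * Ideal.span {b} * Ideal.span {c} ≤ I := by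
      rw [Ideal.span_singleton_mul_span_singleton, Ideal.span_singleton_mul_span_singleton,
        Ideal.span_singleton_le_iff_mem]
      exact habc
    rcases h _ _ _ h1 h2 h3 hle with h' | h'
    · left
      rw [Ideal.span_singleton_mul_span_singleton, Ideal.span_singleton_le_iff_mem] at h'
      exact h'
    · right
      exact h' (Ideal.mem_span_singleton_self c)
end
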